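/- Let J be a simple Euclidean Jordan algebra and c an idempotent of J. Then the Peirce subalgebra J(c,1) is a simple Jordan algebra. -/

import Mathlib

open scoped RealInnerProductSpace

/-- A Euclidean Jordan algebra structure on a finite-dimensional real inner
product space: a commutative bilinear product satisfying the Jordan identity,
with unit `one`, such that the inner product is associative. -/
structure EJA (J : Type) [NormedAddCommGroup J] [InnerProductSpace ℝ J] : Type where
  mul : J →ₗ[ℝ] J →ₗ[ℝ] J
  comm : ∀ x y : J, mul x y = mul y x
  jordan : ∀ x y : J, mul (mul x y) (mul x x) = mul x (mul y (mul x x))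
  one : J
  one_mul : ∀ x : J, mul one x = x
  assoc_inner : ∀ x y z : J, ⟪mul x y, z⟫ = ⟪y, mul x z⟫

variable {J : Type} [NormedAddCommGroup J] [InnerProductSpace ℝ J] [FiniteDimensional ℝ J]

/-- The Peirce `μ`-eigenspace of the idempotent `c`. -/
noncomputable def EJA.peirce (A : EJA J) (c : J) (μ : ℝ) : Submodule ℝ J :=
  Module.End.eigenspace (A.mul c : Module.End ℝ J) μ

/-- A complete system of orthogonal idempotents. -/
def EJA.IsCSOI (A : EJA J) {k : ℕ} (c : Fin k → J) : Prop :=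
  (∀ j, A.mul (c j) (c j) = c j) ∧ (∀ i j, i ≠ j → A.mul (c i) (c j) = 0) ∧
    (∑ j, c j) = A.one

/-- `y` is the Jordan inverse of `x`:  `x∘y = e` and `x²∘y = x`. -/
def EJA.IsInv (A : EJA J) (x y : J) : Prop :=
  A.mul x y = A.one ∧ A.mul (A.mul x x) y = x

/-- An ideal of the Jordan algebra `J`. -/
def EJA.IsIdeal (A : EJA J) (I : Submodule ℝ J) : Prop :=
  ∀ x : J, ∀ a ∈ I, A.mul x a ∈ I

/-- `J` is a simple Jordan algebra: nonzero and with no nontrivial ideal. -/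
def EJA.IsSimple (A : EJA J) : Prop :=
  (∃ x : J, x ≠ 0) ∧ ∀ I : Submodule ℝ J, A.IsIdeal I → I = ⊥ ∨ I = ⊤

/-!
Let `I` be an ideal of `J(c,1)` and split `c = e + f` along `I ⊕ Iᗮ`. Associativity of the
inner product makes `f` annihilate `I`, so `e` is an idempotent acting as a unit on `I`, and `f` is
an idempotent in the Peirce space `J₀(e)`. Inside `J_½(e)`, the part of `f`'s `1`-eigenspace would
have `c`-eigenvalue `3/2`, and the part of its `½`-eigenspace lies in `J(c,1)` and in both `I` and
`Iᗮ`; hence `f` kills `J_½(e)`. If `e ≠ 0`, the ideal `J₁(e) + J_½(e) + J_½(e)²` of `J` is all of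
`J` by simplicity, yet it is orthogonal to `f`; so `f = 0`, `c ∈ I` and `I = J(c,1)`.
-/

namespace EJA

variable {E : Type} [NormedAddCommGroup E] [InnerProductSpace ℝ E] (A : EJA E)

theorem mul_one (x : E) : A.mul x A.one = x :=
  (A.comm x A.one).trans (A.one_mul x)

theorem jordan_linearized (x z w : E) :
    (2 : ℝ) • A.mul (A.mul x w) (A.mul x z) + A.mul (A.mul z w) (A.mul x x) =
      (2 : ℝ) • A.mul x (A.mul w (A.mul x z)) + A.mul z (A.mul w (A.mul x x)) := by
  have hadd := A.jordan (x + z) w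
  have hsub := A.jordan (x - z) w
  simp only [map_add, map_sub, LinearMap.add_apply, LinearMap.sub_apply, A.comm z x] at hadd hsub
  linear_combination (norm := module) (1 / 2 : ℝ) • hadd - (1 / 2 : ℝ) • hsub - A.jordan z w

theorem jordan_polarized (x u z w : E) :
    A.mul (A.mul x w) (A.mul u z) + A.mul (A.mul u w) (A.mul x z) +
        A.mul (A.mul z w) (A.mul x u) =
      A.mul x (A.mul w (A.mul u z)) + A.mul u (A.mul w (A.mul x z)) +
        A.mul z (A.mul w (A.mul x u)) := by
  have h := A.jordan_linearized (x + u) z w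
  simp only [map_add, LinearMap.add_apply, A.comm u x] at h
  linear_combination (norm := module)
    (1 / 2 : ℝ) • (h - A.jordan_linearized x z w - A.jordan_linearized u z w)

variable {A}

@[simp]
theorem mem_peirce {e x : E} {μ : ℝ} : x ∈ A.peirce e μ ↔ A.mul e x = μ • x :=
  Module.End.mem_eigenspace_iff

theorem mem_peirce_one {e x : E} : x ∈ A.peirce e 1 ↔ A.mul e x = x := by simp

theorem mem_peirce_zero {e x : E} : x ∈ A.peirce e 0 ↔ A.mul e x = 0 := by simp

theorem mem_peirce_add {e f x : E} {μ ν : ℝ} (he : x ∈ A.peirce e μ) (hf : x ∈ A.peirce f ν) :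
    x ∈ A.peirce (e + f) (μ + ν) := by
  rw [mem_peirce] at *
  rw [map_add, LinearMap.add_apply, he, hf, add_smul]

theorem peirce_cubic {e : E} (he : A.mul e e = e) (w : E) :
    (2 : ℝ) • A.mul e (A.mul e (A.mul e w)) + A.mul e w = (3 : ℝ) • A.mul e (A.mul e w) := by
  have h := A.jordan_polarized e e w e
  simp only [he, A.comm w e, A.comm (A.mul e w) e] at h
  linear_combination (norm := module) -h

theorem commute_of_mem_peirce {e a : E} {μ : ℝ} (he : A.mul e e = e) (ha : a ∈ A.peirce e μ)
    (hμ : μ ≠ 1 / 2) (w : E) : A.mul e (A.mul a w) = A.mul a (A.mul e w) := by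
  rw [mem_peirce] at ha
  have h := A.jordan_polarized e e a w
  simp only [ha, he, map_smul, A.comm w e, A.comm w a, A.comm (A.mul e w) a,
    A.comm (A.mul a w) e] at h
  have h2 : (2 * μ - 1) • (A.mul a (A.mul e w) - A.mul e (A.mul a w)) = 0 := by
    linear_combination (norm := module) h
  have h3 := (smul_eq_zero.mp h2).resolve_left fun hμ' => hμ (by linarith)
  exact (sub_eq_zero.mp h3).symm

theorem mul_mem_peirce_of_mem_peirce {e a b : E} {μ ν : ℝ} (he : A.mul e e = e)
    (ha : a ∈ A.peirce e μ) (hμ : μ ≠ 1 / 2) (hb : b ∈ A.peirce e ν) :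
    A.mul a b ∈ A.peirce e ν := by
  rw [mem_peirce] at hb ⊢
  rw [A.commute_of_mem_peirce he ha hμ, hb, map_smul]

theorem mul_eq_zero_of_mem_peirce_one_of_mem_peirce_zero {e a b : E} (he : A.mul e e = e)
    (ha : a ∈ A.peirce e 1) (hb : b ∈ A.peirce e 0) : A.mul a b = 0 := by
  have h0 := mem_peirce_zero.mp (A.mul_mem_peirce_of_mem_peirce he ha (by norm_num) hb)
  have h1 := mem_peirce_one.mp (A.mul_mem_peirce_of_mem_peirce he hb (by norm_num) ha)
  rwa [A.comm b a, h0, eq_comm] at h1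

theorem eq_zero_of_mem_peirce {e x : E} {μ : ℝ} (he : A.mul e e = e) (hx : x ∈ A.peirce e μ)
    (h0 : μ ≠ 0) (hhalf : μ ≠ 1 / 2) (h1 : μ ≠ 1) : x = 0 := by
  rw [mem_peirce] at hx
  have h := A.peirce_cubic he x
  simp only [hx, map_smul, smul_smul] at h
  have h2 : (μ * (2 * μ - 1) * (μ - 1)) • x = 0 := by linear_combination (norm := module) h
  refine (smul_eq_zero.mp h2).resolve_left ?_
  have h2μ : 2 * μ - 1 ≠ 0 := fun h2μ => hhalf (by linarith)
  exact mul_ne_zero (mul_ne_zero h0 h2μ) (sub_ne_zero.mpr h1)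

theorem exists_peirce_decomposition {e x : E} (he : A.mul e e = e) {V : Submodule ℝ E}
    (hV : ∀ v ∈ V, A.mul e v ∈ V) (hx : x ∈ V) :
    ∃ x₁ ∈ A.peirce e 1 ⊓ V, ∃ x₂ ∈ A.peirce e (1 / 2) ⊓ V, ∃ x₀ ∈ A.peirce e 0 ⊓ V,
      x = x₁ + x₂ + x₀ := by
  have hex := hV x hx
  have heex := hV _ hex
  have hcubic := A.peirce_cubic he x
  refine ⟨(2 : ℝ) • A.mul e (A.mul e x) - A.mul e x, Submodule.mem_inf.mpr ⟨?_, ?_⟩,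
    (4 : ℝ) • A.mul e x - (4 : ℝ) • A.mul e (A.mul e x), Submodule.mem_inf.mpr ⟨?_, ?_⟩,
    x - (3 : ℝ) • A.mul e x + (2 : ℝ) • A.mul e (A.mul e x), Submodule.mem_inf.mpr ⟨?_, ?_⟩,
    by module⟩
  · rw [mem_peirce]; simp only [map_smul, map_sub]
    linear_combination (norm := module) hcubic
  · exact V.sub_mem (V.smul_mem _ heex) hex
  · rw [mem_peirce]; simp only [map_smul, map_sub]
    linear_combination (norm := module) (-2 : ℝ) • hcubic
  · exact V.sub_mem (V.smul_mem _ hex) (V.smul_mem _ heex)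
  · rw [mem_peirce]; simp only [map_smul, map_sub, map_add]
    linear_combination (norm := module) hcubic
  · exact V.add_mem (V.sub_mem hx (V.smul_mem _ hex)) (V.smul_mem _ heex)

theorem mul_mul_mem_peirce_one {e a b : E} (he : A.mul e e = e)
    (ha : a ∈ A.peirce e (1 / 2)) (hb : b ∈ A.peirce e (1 / 2)) :
    A.mul e (A.mul a b) ∈ A.peirce e 1 := by
  rw [mem_peirce] at ha hb
  have h := A.jordan_polarized a b e e
  simp only [A.comm a e, A.comm b e, A.comm b a, he, ha, hb, map_smul,
    LinearMap.smul_apply] at h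
  rw [mem_peirce_one]
  linear_combination (norm := module) -h

theorem mul_mem_peirce_one_sup_peirce_zero {e a b : E} (he : A.mul e e = e)
    (ha : a ∈ A.peirce e (1 / 2)) (hb : b ∈ A.peirce e (1 / 2)) :
    A.mul a b ∈ A.peirce e 1 ⊔ A.peirce e 0 := by
  have h1 := A.mul_mul_mem_peirce_one he ha hb
  refine Submodule.mem_sup.mpr ⟨_, h1, A.mul a b - A.mul e (A.mul a b), ?_, add_sub_cancel _ _⟩
  rw [mem_peirce_zero, map_sub, mem_peirce_one.mp h1, sub_self]

theorem mul_mul_eq_of_mem_peirce_zero {e x a b : E} (hx : x ∈ A.peirce e 0)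
    (ha : a ∈ A.peirce e (1 / 2)) (hb : b ∈ A.peirce e (1 / 2)) :
    A.mul x (A.mul a b) = A.mul a (A.mul x b) + A.mul (A.mul x a) b
      - (2 : ℝ) • A.mul e (A.mul (A.mul x a) b) := by
  rw [mem_peirce] at hx ha hb
  have h := A.jordan_polarized x (A.one - e) a b
  simp only [map_sub, LinearMap.sub_apply, A.one_mul, A.mul_one, A.comm x e, ha, hb, hx,
    map_smul, LinearMap.smul_apply, zero_smul, A.comm (A.mul x b) a, A.comm (A.mul a b) x,
    A.comm b x, A.comm b (A.mul x a), A.comm b a, map_zero] at h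
  linear_combination (norm := module) (2 : ℝ) • h

variable (A) in
/-- `J₁(e) + J_½(e) + J_½(e)²`, the ideal generated by the idempotent `e`. -/
noncomputable def peirceIdeal (e : E) : Submodule ℝ E :=
  A.peirce e 1 ⊔ A.peirce e (1 / 2) ⊔
    Submodule.span ℝ (Set.image2 (fun a b => A.mul a b) (A.peirce e (1 / 2)) (A.peirce e (1 / 2)))

theorem peirce_one_le_peirceIdeal (e : E) : A.peirce e 1 ≤ A.peirceIdeal e :=
  le_sup_left.trans le_sup_left

theorem peirce_half_le_peirceIdeal (e : E) : A.peirce e (1 / 2) ≤ A.peirceIdeal e :=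
  le_sup_right.trans le_sup_left

theorem mul_mem_peirceIdeal {e a b : E} (ha : a ∈ A.peirce e (1 / 2))
    (hb : b ∈ A.peirce e (1 / 2)) : A.mul a b ∈ A.peirceIdeal e :=
  le_sup_right (a := A.peirce e 1 ⊔ A.peirce e (1 / 2))
    (Submodule.subset_span (Set.mem_image2_of_mem ha hb))

theorem peirceIdeal_le_comap_of_mem_peirce_one {e y : E} (he : A.mul e e = e)
    (hy : y ∈ A.peirce e 1) : A.peirceIdeal e ≤ (A.peirceIdeal e).comap (A.mul y) := by
  have hy' : (1 : ℝ) ≠ 1 / 2 := by norm_num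
  refine sup_le (sup_le (fun b hb => ?_) (fun b hb => ?_)) (Submodule.span_le.mpr ?_)
  · exact A.peirce_one_le_peirceIdeal e (A.mul_mem_peirce_of_mem_peirce he hy hy' hb)
  · exact A.peirce_half_le_peirceIdeal e (A.mul_mem_peirce_of_mem_peirce he hy hy' hb)
  · rintro _ ⟨a, ha, b, hb, rfl⟩
    obtain ⟨u₁, hu₁, u₀, hu₀, hu⟩ :=
      Submodule.mem_sup.mp (A.mul_mem_peirce_one_sup_peirce_zero he ha hb)
    change A.mul y (A.mul a b) ∈ A.peirceIdeal e
    rw [← hu, map_add, A.mul_eq_zero_of_mem_peirce_one_of_mem_peirce_zero he hy hu₀, add_zero]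
    exact A.peirce_one_le_peirceIdeal e (A.mul_mem_peirce_of_mem_peirce he hy hy' hu₁)

theorem peirceIdeal_le_comap_of_mem_peirce_half {e y : E} (he : A.mul e e = e)
    (hy : y ∈ A.peirce e (1 / 2)) : A.peirceIdeal e ≤ (A.peirceIdeal e).comap (A.mul y) := by
  have hmul : ∀ {μ b}, b ∈ A.peirce e μ → μ ≠ 1 / 2 → A.mul y b ∈ A.peirceIdeal e :=
    fun hb hμ => by
      rw [A.comm]
      exact A.peirce_half_le_peirceIdeal e (A.mul_mem_peirce_of_mem_peirce he hb hμ hy)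
  refine sup_le (sup_le (fun b hb => hmul hb (by norm_num)) (fun b hb => ?_))
    (Submodule.span_le.mpr ?_)
  · exact A.mul_mem_peirceIdeal hy hb
  · rintro _ ⟨a, ha, b, hb, rfl⟩
    obtain ⟨u₁, hu₁, u₀, hu₀, hu⟩ :=
      Submodule.mem_sup.mp (A.mul_mem_peirce_one_sup_peirce_zero he ha hb)
    change A.mul y (A.mul a b) ∈ A.peirceIdeal e
    rw [← hu, map_add]
    exact add_mem (hmul hu₁ (by norm_num)) (hmul hu₀ (by norm_num))

theorem peirceIdeal_le_comap_of_mem_peirce_zero {e y : E} (he : A.mul e e = e)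
    (hy : y ∈ A.peirce e 0) : A.peirceIdeal e ≤ (A.peirceIdeal e).comap (A.mul y) := by
  have hy' : (0 : ℝ) ≠ 1 / 2 := by norm_num
  refine sup_le (sup_le (fun b hb => ?_) (fun b hb => ?_)) (Submodule.span_le.mpr ?_)
  · change A.mul y b ∈ A.peirceIdeal e
    rw [A.comm, A.mul_eq_zero_of_mem_peirce_one_of_mem_peirce_zero he hb hy]
    exact zero_mem _
  · exact A.peirce_half_le_peirceIdeal e (A.mul_mem_peirce_of_mem_peirce he hy hy' hb)
  · rintro _ ⟨a, ha, b, hb, rfl⟩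
    change A.mul y (A.mul a b) ∈ A.peirceIdeal e
    have hya := A.mul_mem_peirce_of_mem_peirce he hy hy' ha
    have hyb := A.mul_mem_peirce_of_mem_peirce he hy hy' hb
    rw [A.mul_mul_eq_of_mem_peirce_zero hy ha hb]
    refine sub_mem (add_mem (A.mul_mem_peirceIdeal ha hyb) (A.mul_mem_peirceIdeal hya hb))
      (Submodule.smul_mem _ _ (A.peirce_one_le_peirceIdeal e ?_))
    exact A.mul_mul_mem_peirce_one he hya hb

theorem isIdeal_peirceIdeal {e : E} (he : A.mul e e = e) : A.IsIdeal (A.peirceIdeal e) := by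
  intro x k hk
  obtain ⟨x₁, hx₁, x₂, hx₂, x₀, hx₀, rfl⟩ :=
    A.exists_peirce_decomposition he (x := x) (V := ⊤) (fun _ _ => trivial) Submodule.mem_top
  rw [map_add, map_add, LinearMap.add_apply, LinearMap.add_apply]
  exact add_mem (add_mem (A.peirceIdeal_le_comap_of_mem_peirce_one he hx₁.1 hk)
    (A.peirceIdeal_le_comap_of_mem_peirce_half he hx₂.1 hk))
    (A.peirceIdeal_le_comap_of_mem_peirce_zero he hx₀.1 hk)

theorem inner_eq_zero_of_mem_peirce_zero {e f k : E} {μ : ℝ} (hf : f ∈ A.peirce e 0)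
    (hk : k ∈ A.peirce e μ) (hμ : μ ≠ 0) : ⟪f, k⟫ = 0 := by
  have h := A.assoc_inner e f k
  rw [mem_peirce_zero.mp hf, mem_peirce.mp hk, inner_zero_left, real_inner_smul_right] at h
  exact (mul_eq_zero.mp h.symm).resolve_left hμ

theorem peirceIdeal_le_orthogonal {e f : E} (hf : f ∈ A.peirce e 0)
    (hfhalf : ∀ z ∈ A.peirce e (1 / 2), A.mul f z = 0) : A.peirceIdeal e ≤ (ℝ ∙ f)ᗮ := by
  simp only [peirceIdeal, sup_le_iff, Submodule.span_le]
  refine ⟨⟨fun k hk => ?_, fun k hk => ?_⟩, ?_⟩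
  · exact Submodule.mem_orthogonal_singleton_iff_inner_right.mpr
      (A.inner_eq_zero_of_mem_peirce_zero hf hk one_ne_zero)
  · exact Submodule.mem_orthogonal_singleton_iff_inner_right.mpr
      (A.inner_eq_zero_of_mem_peirce_zero hf hk (by norm_num))
  · rintro _ ⟨a, ha, b, -, rfl⟩
    rw [SetLike.mem_coe, Submodule.mem_orthogonal_singleton_iff_inner_right,
      ← A.assoc_inner, A.comm, hfhalf a ha, inner_zero_left]

theorem eq_zero_of_mul_peirce_half_eq_zero (hA : A.IsSimple) {e f : E} (he : A.mul e e = e)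
    (he0 : e ≠ 0) (hf : f ∈ A.peirce e 0) (hfhalf : ∀ z ∈ A.peirce e (1 / 2), A.mul f z = 0) :
    f = 0 := by
  have hetop : A.peirceIdeal e = ⊤ := by
    refine (hA.2 _ (A.isIdeal_peirceIdeal he)).resolve_left fun hbot => he0 ?_
    simpa [hbot] using A.peirce_one_le_peirceIdeal e (mem_peirce_one.mpr he)
  have hf' := A.peirceIdeal_le_orthogonal hf hfhalf (hetop ▸ Submodule.mem_top (x := f))
  exact inner_self_eq_zero.mp (Submodule.mem_orthogonal_singleton_iff_inner_right.mp hf')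

theorem mul_mem_orthogonal {b f : E} {I : Submodule ℝ E} (hb : ∀ u ∈ I, A.mul b u ∈ I)
    (hf : f ∈ Iᗮ) : A.mul b f ∈ Iᗮ := by
  refine (Submodule.mem_orthogonal' I _).mpr fun u hu => ?_
  rw [A.assoc_inner]
  exact Submodule.inner_left_of_mem_orthogonal (hb u hu) hf

section IdealOfPeirceOne

variable {c : E} {I : Submodule ℝ E}

theorem mul_eq_zero_of_mem_orthogonal (hIc : I ≤ A.peirce c 1)
    (hI : ∀ x ∈ A.peirce c 1, ∀ a ∈ I, A.mul x a ∈ I) {f a : E} (hf : f ∈ A.peirce c 1)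
    (hfI : f ∈ Iᗮ) (ha : a ∈ I) : A.mul f a = 0 := by
  have hmem : A.mul f a ∈ I := hI f hf a ha
  have hperp : A.mul f a ∈ Iᗮ := A.comm a f ▸ A.mul_mem_orthogonal (hI a (hIc ha)) hfI
  exact Submodule.disjoint_def.mp I.orthogonal_disjoint _ hmem hperp

theorem mem_peirce_one_of_add_eq (hc : A.mul c c = c) (hIc : I ≤ A.peirce c 1) {e f : E}
    (he : e ∈ I) (hcef : e + f = c) : f ∈ A.peirce c 1 := by
  rw [eq_sub_of_add_eq' hcef]
  exact sub_mem (mem_peirce_one.mpr hc) (hIc he)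

theorem mul_eq_self_of_mem (hc : A.mul c c = c) (hIc : I ≤ A.peirce c 1)
    (hI : ∀ x ∈ A.peirce c 1, ∀ a ∈ I, A.mul x a ∈ I) {e f : E} (he : e ∈ I) (hf : f ∈ Iᗮ)
    (hcef : e + f = c) {a : E} (ha : a ∈ I) : A.mul e a = a := by
  have hfc := A.mem_peirce_one_of_add_eq hc hIc he hcef
  have hca := mem_peirce_one.mp (hIc ha)
  rwa [← hcef, map_add, LinearMap.add_apply,
    A.mul_eq_zero_of_mem_orthogonal hIc hI hfc hf ha, add_zero] at hca

theorem mem_peirce_zero_of_add_eq (hc : A.mul c c = c) (hIc : I ≤ A.peirce c 1)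
    (hI : ∀ x ∈ A.peirce c 1, ∀ a ∈ I, A.mul x a ∈ I) {e f : E} (he : e ∈ I) (hf : f ∈ Iᗮ)
    (hcef : e + f = c) : f ∈ A.peirce e 0 := by
  rw [mem_peirce_zero, A.comm]
  exact A.mul_eq_zero_of_mem_orthogonal hIc hI (A.mem_peirce_one_of_add_eq hc hIc he hcef) hf he

theorem eq_zero_of_mem_peirce_half_of_mem_peirce_half
    (hI : ∀ x ∈ A.peirce c 1, ∀ a ∈ I, A.mul x a ∈ I) {e f z : E} (he : e ∈ I) (hf : f ∈ Iᗮ)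
    (hz : z ∈ A.peirce c 1) (hze : z ∈ A.peirce e (1 / 2)) (hzf : z ∈ A.peirce f (1 / 2)) :
    z = 0 := by
  have hzI : z ∈ I := by
    have h : z = (2 : ℝ) • A.mul z e := by rw [A.comm, mem_peirce.mp hze]; module
    exact h ▸ I.smul_mem _ (hI z hz e he)
  have hzIperp : z ∈ Iᗮ := by
    have h : z = (2 : ℝ) • A.mul z f := by rw [A.comm, mem_peirce.mp hzf]; module
    exact h ▸ Iᗮ.smul_mem _ (A.mul_mem_orthogonal (hI z hz) hf)
  exact Submodule.disjoint_def.mp I.orthogonal_disjoint z hzI hzIperp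

theorem mul_eq_zero_of_mem_peirce_half (hc : A.mul c c = c) (hIc : I ≤ A.peirce c 1)
    (hI : ∀ x ∈ A.peirce c 1, ∀ a ∈ I, A.mul x a ∈ I) {e f : E} (he : e ∈ I) (hf : f ∈ Iᗮ)
    (hcef : e + f = c) {z : E} (hz : z ∈ A.peirce e (1 / 2)) : A.mul f z = 0 := by
  have hee : A.mul e e = e := A.mul_eq_self_of_mem hc hIc hI he hf hcef he
  have hfe := A.mem_peirce_zero_of_add_eq hc hIc hI he hf hcef
  have hff : A.mul f f = f := by
    have h := mem_peirce_one.mp (A.mem_peirce_one_of_add_eq hc hIc he hcef)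
    rwa [← hcef, map_add, LinearMap.add_apply, mem_peirce_zero.mp hfe, zero_add] at h
  obtain ⟨z₁, hz₁, z₂, hz₂, z₀, hz₀, rfl⟩ := A.exists_peirce_decomposition hff
    (fun v hv => A.mul_mem_peirce_of_mem_peirce hee hfe (by norm_num) hv) hz
  rw [Submodule.mem_inf] at hz₁ hz₂ hz₀
  have hz₁0 : z₁ = 0 := by
    refine A.eq_zero_of_mem_peirce hc (μ := 3 / 2) ?_ (by norm_num) (by norm_num) (by norm_num)
    rw [← hcef]
    convert mem_peirce_add hz₁.2 hz₁.1 using 1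
    norm_num
  have hz₂0 : z₂ = 0 := by
    refine A.eq_zero_of_mem_peirce_half_of_mem_peirce_half hI he hf ?_ hz₂.2 hz₂.1
    rw [← hcef]
    convert mem_peirce_add hz₂.2 hz₂.1 using 1
    norm_num
  rw [map_add, map_add, mem_peirce_one.mp hz₁.1, mem_peirce.mp hz₂.1, mem_peirce_zero.mp hz₀.1,
    hz₁0, hz₂0, smul_zero, add_zero, add_zero]

end IdealOfPeirceOne

end EJA

/-- If `J` is a simple Euclidean Jordan algebra and `c` a nonzero idempotent,
then the Peirce subalgebra `J(c,1)` is a simple Jordan algebra: it is nonzero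
and its only ideals are `⊥` and `J(c,1)`. -/
theorem stmt8 (A : EJA J) (hA : A.IsSimple) (c : J) (hc : A.mul c c = c)
    (hc0 : c ≠ 0) :
    (∃ x ∈ A.peirce c 1, x ≠ 0) ∧
    ∀ I : Submodule ℝ J, I ≤ A.peirce c 1 →
      (∀ x ∈ A.peirce c 1, ∀ a ∈ I, A.mul x a ∈ I) →
      I = ⊥ ∨ I = A.peirce c 1 := by
  refine ⟨⟨c, EJA.mem_peirce_one.mpr hc, hc0⟩, fun I hIc hI => ?_⟩
  set e := I.starProjection c
  have he : e ∈ I := I.starProjection_apply_mem c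
  have hf : c - e ∈ Iᗮ := I.sub_starProjection_mem_orthogonal c
  have hcef : e + (c - e) = c := add_sub_cancel e c
  have heI : ∀ a ∈ I, A.mul e a = a := fun a ha => A.mul_eq_self_of_mem hc hIc hI he hf hcef ha
  by_cases he0 : e = 0
  · refine Or.inl ((Submodule.eq_bot_iff I).mpr fun a ha => ?_)
    rw [← heI a ha, he0, map_zero, LinearMap.zero_apply]
  · have hce : c = e := sub_eq_zero.mp <| A.eq_zero_of_mul_peirce_half_eq_zero hA (heI e he) he0
      (A.mem_peirce_zero_of_add_eq hc hIc hI he hf hcef)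
      fun z hz => A.mul_eq_zero_of_mem_peirce_half hc hIc hI he hf hcef hz
    refine Or.inr (le_antisymm hIc fun x hx => ?_)
    rw [← EJA.mem_peirce_one.mp hx, A.comm]
    exact hI x hx c (hce ▸ he)
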